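/- Let (G,I,O,λ) be a labelled open graph with I∩O = ∅ and λ(v) = X for all v ∈ O̅. Then (G,I,O,λ) has a focussed Pauli flow if and only if the reduced adjacency matrix A_G|_{I̅}^{O̅} (the O̅ × I̅ submatrix of the adjacency matrix of G over F₂, obtained by deleting output rows and input columns) is right-invertible over F₂. Moreover, the columns of any right inverse encode correction sets: setting c(v) := { u ∈ I̅ | N_{u,v} = 1 } for a right inverse N yields a focussed Pauli flow (c,∅), and conversely the indicator vectors of correction sets of a focussed flow form a right inverse. -/
import Mathlib


inductive MLabel | X | Y | Z | XY | XZ | YZ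
deriving DecidableEq

open Finset

variable {V : Type} [Fintype V] [DecidableEq V]

/-- The odd neighbourhood of a set of vertices. -/
def Odds (G : SimpleGraph V) [DecidableRel G.Adj] (A : Finset V) : Finset V :=
  Finset.univ.filter fun v => Odd (A ∩ G.neighborFinset v).card

/-- Pauli flow conditions (P1)-(P9) for a labelled open graph. -/
structure PauliFlow (G : SimpleGraph V) [DecidableRel G.Adj]
    (I O : Finset V) (lam : V → MLabel) (c : V → Finset V) (prec : V → V → Prop) : Prop where
  irrefl : ∀ u, ¬ prec u u
  trans : ∀ u v w, prec u v → prec v w → prec u w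
  csub : ∀ u, u ∉ O → ∀ v ∈ c u, v ∉ I
  P1 : ∀ u, u ∉ O → ∀ v ∈ c u, v ∉ O → u ≠ v →
      lam v ≠ MLabel.X → lam v ≠ MLabel.Y → prec u v
  P2 : ∀ u, u ∉ O → ∀ v ∈ Odds G (c u), v ∉ O → u ≠ v →
      lam v ≠ MLabel.Y → lam v ≠ MLabel.Z → prec u v
  P3 : ∀ u, u ∉ O → ∀ v, v ∉ O → ¬ prec u v → u ≠ v → lam v = MLabel.Y →
      (v ∈ c u ↔ v ∈ Odds G (c u))
  P4 : ∀ u, u ∉ O → lam u = MLabel.XY → u ∉ c u ∧ u ∈ Odds G (c u)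
  P5 : ∀ u, u ∉ O → lam u = MLabel.XZ → u ∈ c u ∧ u ∈ Odds G (c u)
  P6 : ∀ u, u ∉ O → lam u = MLabel.YZ → u ∈ c u ∧ u ∉ Odds G (c u)
  P7 : ∀ u, u ∉ O → lam u = MLabel.X → u ∈ Odds G (c u)
  P8 : ∀ u, u ∉ O → lam u = MLabel.Z → u ∈ c u
  P9 : ∀ u, u ∉ O → lam u = MLabel.Y → Xor' (u ∈ c u) (u ∈ Odds G (c u))

/-- Focussing conditions (F1)-(F3). -/
def Focussed (G : SimpleGraph V) [DecidableRel G.Adj]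
    (O : Finset V) (lam : V → MLabel) (c : V → Finset V) : Prop :=
  ∀ v, v ∉ O →
    (∀ w, w ∉ O → w ≠ v → w ∈ c v →
      lam w = MLabel.XY ∨ lam w = MLabel.X ∨ lam w = MLabel.Y) ∧
    (∀ w, w ∉ O → w ≠ v → w ∈ Odds G (c v) →
      lam w = MLabel.XZ ∨ lam w = MLabel.YZ ∨ lam w = MLabel.Y ∨ lam w = MLabel.Z) ∧
    (∀ w, w ∉ O → w ≠ v → lam w = MLabel.Y → (w ∈ c v ↔ w ∈ Odds G (c v)))

/-- The reduced adjacency matrix over F₂: rows indexed by non-outputs, columns by non-inputs. -/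
def redAdj (G : SimpleGraph V) [DecidableRel G.Adj] (I O : Finset V) :
    Matrix {v : V // v ∉ O} {v : V // v ∉ I} (ZMod 2) :=
  Matrix.of fun v u => if G.Adj v.val u.val then 1 else 0

/-- The correction function obtained from the columns of a right inverse `N` of
the reduced adjacency matrix. -/
def corrOfInv (I O : Finset V)
    (N : Matrix {v : V // v ∉ I} {v : V // v ∉ O} (ZMod 2)) (v : V) : Finset V :=
  if h : v ∉ O then
    (Finset.univ.filter fun u : {u : V // u ∉ I} => N u ⟨v, h⟩ = 1).image Subtype.val
  else ∅

/-- The candidate right inverse obtained from a correction function: column `v`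
is the indicator vector of `c(v)`. -/
def invOfCorr (I O : Finset V) (c : V → Finset V) :
    Matrix {v : V // v ∉ I} {v : V // v ∉ O} (ZMod 2) :=
  Matrix.of fun u v => if u.val ∈ c v.val then 1 else 0


section Aux
variable {V : Type} [Fintype V] [DecidableEq V]

private lemma zmod2_cast (n : ℕ) : ((n : ZMod 2)) = if Odd n then 1 else 0 := by
  rcases Nat.even_or_odd n with h | h
  · rw [if_neg (Nat.not_odd_iff_even.mpr h)]
    obtain ⟨k, rfl⟩ := h
    push_cast
    rw [show ((k : ZMod 2) + k) = 2 * k from by ring, show (2 : ZMod 2) = 0 from rfl,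
      zero_mul]
  · rw [if_pos h]
    obtain ⟨k, rfl⟩ := h
    push_cast
    rw [show ((2 : ZMod 2) * k + 1) = 2 * k + 1 from rfl, show (2 : ZMod 2) = 0 from rfl,
      zero_mul, zero_add]

/-- The abstract condition equivalent (under all-X labels) to focussed Pauli flow. -/
private def GoodC (G : SimpleGraph V) [DecidableRel G.Adj] (I O : Finset V)
    (c : V → Finset V) : Prop :=
  ∀ v, v ∉ O → (∀ x ∈ c v, x ∉ I) ∧ ∀ w, w ∉ O → (w ∈ Odds G (c v) ↔ w = v)

private lemma prod_entry (G : SimpleGraph V) [DecidableRel G.Adj] (I O : Finset V)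
    (c : V → Finset V) (hc : ∀ v, v ∉ O → ∀ x ∈ c v, x ∉ I)
    (v w : {v : V // v ∉ O}) :
    (redAdj G I O * invOfCorr I O c) v w
      = if v.val ∈ Odds G (c w.val) then 1 else 0 := by
  have hcard : (c w.val ∩ G.neighborFinset v.val).card
      = (Finset.univ.filter fun u : {u : V // u ∉ I} =>
          G.Adj v.val u.val ∧ u.val ∈ c w.val).card := by
    refine (Finset.card_bij (fun (a : {u : V // u ∉ I}) _ => a.val) ?_ ?_ ?_).symm
    · intro a ha
      simp only [Finset.mem_filter, Finset.mem_univ, true_and] at ha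
      simp [Finset.mem_inter, SimpleGraph.mem_neighborFinset, ha.1, ha.2]
    · intro a _ b _ h; exact Subtype.ext h
    · intro b hb
      simp only [Finset.mem_inter, SimpleGraph.mem_neighborFinset] at hb
      exact ⟨⟨b, hc w.val w.2 b hb.1⟩, by simp [hb.1, hb.2], rfl⟩
  have hsum : (redAdj G I O * invOfCorr I O c) v w
      = ∑ u : {u : V // u ∉ I},
          if G.Adj v.val u.val ∧ u.val ∈ c w.val then (1 : ZMod 2) else 0 := by
    rw [Matrix.mul_apply]
    refine Finset.sum_congr rfl fun u _ => ?_
    by_cases h1 : G.Adj v.val u.val <;> by_cases h2 : u.val ∈ c w.val <;>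
      simp [redAdj, invOfCorr, h1, h2]
  rw [hsum, Finset.sum_boole, zmod2_cast, ← hcard]
  simp [Odds]

private lemma prod_eq_one (G : SimpleGraph V) [DecidableRel G.Adj] (I O : Finset V)
    (c : V → Finset V) (hgood : GoodC G I O c) :
    redAdj G I O * invOfCorr I O c = 1 := by
  ext v w
  rw [prod_entry G I O c (fun v hv => (hgood v hv).1) v w]
  have h := (hgood w.val w.2).2 v.val v.2
  by_cases hvw : v = w
  · subst hvw; simp [Matrix.one_apply, h]
  · have hne : v.val ≠ w.val := fun h' => hvw (Subtype.ext h')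
    simp [Matrix.one_apply, hvw, h, hne]

private lemma corr_sub (I O : Finset V)
    (N : Matrix {v : V // v ∉ I} {v : V // v ∉ O} (ZMod 2)) :
    ∀ v, v ∉ O → ∀ x ∈ corrOfInv I O N v, x ∉ I := by
  intro v hv x hx
  simp only [corrOfInv, dif_pos hv, Finset.mem_image] at hx
  obtain ⟨a, _, rfl⟩ := hx; exact a.2

private lemma invOfCorr_corrOfInv (I O : Finset V)
    (N : Matrix {v : V // v ∉ I} {v : V // v ∉ O} (ZMod 2)) :
    invOfCorr I O (corrOfInv I O N) = N := by
  ext u v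
  have hmem : u.val ∈ corrOfInv I O N v.val ↔ N u v = 1 := by
    simp only [corrOfInv, dif_pos v.2, Finset.mem_image, Finset.mem_filter,
      Finset.mem_univ, true_and]
    constructor
    · rintro ⟨a, ha, hav⟩
      rwa [show a = u from Subtype.ext hav] at ha
    · intro h; exact ⟨u, h, rfl⟩
  have h01 : ∀ x : ZMod 2, x = 0 ∨ x = 1 := by decide
  rcases h01 (N u v) with h | h <;>
    simp [invOfCorr, hmem, h]

private lemma good_of_inv (G : SimpleGraph V) [DecidableRel G.Adj] (I O : Finset V)
    (N : Matrix {v : V // v ∉ I} {v : V // v ∉ O} (ZMod 2))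
    (hN : redAdj G I O * N = 1) :
    GoodC G I O (corrOfInv I O N) := by
  intro v hv
  refine ⟨corr_sub I O N v hv, fun w hw => ?_⟩
  have h1 : redAdj G I O * invOfCorr I O (corrOfInv I O N) = 1 := by
    rw [invOfCorr_corrOfInv]; exact hN
  have h2 := prod_entry G I O (corrOfInv I O N) (corr_sub I O N) ⟨w, hw⟩ ⟨v, hv⟩
  rw [h1, Matrix.one_apply] at h2
  simp only [Subtype.mk.injEq] at h2
  constructor
  · intro ho
    by_contra hwv
    rw [if_neg hwv, if_pos ho] at h2
    exact zero_ne_one h2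
  · rintro rfl
    by_contra ho
    rw [if_pos rfl, if_neg ho] at h2
    exact one_ne_zero h2

private lemma flow_of_good (G : SimpleGraph V) [DecidableRel G.Adj] (I O : Finset V)
    (lam : V → MLabel) (hlam : ∀ v, v ∉ O → lam v = MLabel.X)
    (c : V → Finset V) (hgood : GoodC G I O c) :
    PauliFlow G I O lam c (fun _ _ => False) ∧ Focussed G O lam c := by
  constructor
  · refine ⟨fun u h => h, fun _ _ _ h _ => h.elim, fun u hu => (hgood u hu).1,
      ?_, ?_, ?_, ?_, ?_, ?_, ?_, ?_, ?_⟩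
    · intro u hu v hv hvO _ hX _; exact absurd (hlam v hvO) hX
    · intro u hu v hv hvO huv _ _
      exact huv (((hgood u hu).2 v hvO).mp hv).symm
    · intro u hu v hvO _ _ hY; rw [hlam v hvO] at hY; exact absurd hY (by simp)
    · intro u hu hY; rw [hlam u hu] at hY; exact absurd hY (by simp)
    · intro u hu hY; rw [hlam u hu] at hY; exact absurd hY (by simp)
    · intro u hu hY; rw [hlam u hu] at hY; exact absurd hY (by simp)
    · intro u hu _; exact ((hgood u hu).2 u hu).mpr rfl
    · intro u hu hY; rw [hlam u hu] at hY; exact absurd hY (by simp)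
    · intro u hu hY; rw [hlam u hu] at hY; exact absurd hY (by simp)
  · intro v hv
    refine ⟨fun w hw _ _ => Or.inr (Or.inl (hlam w hw)), ?_, ?_⟩
    · intro w hw hwv hmem
      exact absurd (((hgood v hv).2 w hw).mp hmem) hwv
    · intro w hw hwv hY; rw [hlam w hw] at hY; exact absurd hY (by simp)

private lemma good_of_flow (G : SimpleGraph V) [DecidableRel G.Adj] (I O : Finset V)
    (lam : V → MLabel) (hlam : ∀ v, v ∉ O → lam v = MLabel.X)
    (c : V → Finset V) (prec : V → V → Prop)
    (hp : PauliFlow G I O lam c prec) (hf : Focussed G O lam c) :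
    GoodC G I O c := by
  intro v hv
  refine ⟨hp.csub v hv, fun w hw => ⟨fun hmem => ?_, ?_⟩⟩
  · by_contra hne
    have h := (hf v hv).2.1 w hw hne hmem
    rw [hlam w hw] at h
    simp at h
  · rintro rfl; exact hp.P7 w hw (hlam w hw)

end Aux

/-- For an all-X labelled open graph with `I ∩ O = ∅`: a focussed Pauli flow
exists iff the reduced adjacency matrix is right-invertible over F₂; the
columns of any right inverse give the correction sets of a focussed Pauli flow
with empty order, and conversely the correction sets of any focussed flow form
a right inverse. -/
theorem focussed_flow_iff_right_invertible (G : SimpleGraph V) [DecidableRel G.Adj]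
    (I O : Finset V) (hIO : I ∩ O = ∅)
    (lam : V → MLabel) (hlam : ∀ v, v ∉ O → lam v = MLabel.X) :
    ((∃ (c : V → Finset V) (prec : V → V → Prop),
        PauliFlow G I O lam c prec ∧ Focussed G O lam c) ↔
      ∃ N : Matrix {v : V // v ∉ I} {v : V // v ∉ O} (ZMod 2), redAdj G I O * N = 1) ∧
    (∀ N : Matrix {v : V // v ∉ I} {v : V // v ∉ O} (ZMod 2),
      redAdj G I O * N = 1 →
        PauliFlow G I O lam (corrOfInv I O N) (fun _ _ => False) ∧
        Focussed G O lam (corrOfInv I O N)) ∧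
    (∀ c : V → Finset V,
      PauliFlow G I O lam c (fun _ _ => False) → Focussed G O lam c →
        redAdj G I O * invOfCorr I O c = 1) := by
  refine ⟨⟨?_, ?_⟩, ?_, ?_⟩
  · rintro ⟨c, prec, hp, hf⟩
    exact ⟨invOfCorr I O c, prod_eq_one G I O c (good_of_flow G I O lam hlam c prec hp hf)⟩
  · rintro ⟨N, hN⟩
    obtain ⟨hp, hf⟩ := flow_of_good G I O lam hlam _ (good_of_inv G I O N hN)
    exact ⟨_, _, hp, hf⟩
  · intro N hN
    exact flow_of_good G I O lam hlam _ (good_of_inv G I O N hN)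
  · intro c hp hf
    exact prod_eq_one G I O c (good_of_flow G I O lam hlam c _ hp hf)
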